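/- arXiv:2511.21228 — 6 statements merged into one kernel-verified Lean document; each statement's English description precedes it below -/
import Mathlib

section
/- If the graph is connected and simple with N vertices, any non-fully-synchronized equilibrium x* (i.e., not all components equal) and any c with min_i x*_i < c < max_i x*_i such that s separates values (defining I = {i : s(x*_i) < c}, J = {j : s(x*_j) > c}), both I and J contain at least two elements. In particular, if N ≤ 3, every equilibrium is fully synchronized. -/
theorem stmt6 {N : ℕ} (G : SimpleGraph (Fin N)) [DecidableRel G.Adj]
    (hconn : G.Connected)
    (a : Fin N → Fin N → ℝ) (haG : ∀ i j, a i j = if G.Adj i j then 1 else 0)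
    (d : Fin N → ℝ) (hd : ∀ i, d i = ∑ j, a i j) (hdpos : ∀ i, 0 < d i)
    (s : ℝ → ℝ) (hs : MonotoneOn s (Set.Icc (-1) 1))
    (hmaps : Set.MapsTo s (Set.Icc (-1) 1) (Set.Icc (-1) 1))
    (x : Fin N → ℝ) (hx : ∀ j, x j ∈ Set.Icc (-1 : ℝ) 1)
    (heq : ∀ i, x i = (1 / d i) * ∑ j, a i j * s (x j))
    (hns : ∃ i j, x i ≠ x j)
    (c : ℝ) (m M : Fin N) (hm : ∀ j, x m ≤ x j) (hM : ∀ j, x j ≤ x M)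
    (hc1 : x m < c) (hc2 : c < x M) :
    2 ≤ Set.ncard {i | s (x i) < c} ∧ 2 ≤ Set.ncard {i | c < s (x i)} ∧
      4 ≤ N := by
  have hanneg : ∀ i j, 0 ≤ a i j := by
    intro i j; rw [haG i j]; split <;> norm_num
  have haself : ∀ i, a i i = 0 := by
    intro i; rw [haG i i]; simp [G.irrefl]
  have key : ∀ (i : Fin N) (t : ℝ), (∀ j, a i j * t ≤ a i j * s (x j)) → t ≤ x i := by
    intro i t h
    rw [heq i, one_div, inv_mul_eq_div, le_div_iff₀ (hdpos i)]
    calc t * d i = ∑ j, a i j * t := by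
          rw [hd i, mul_comm, Finset.sum_mul]
      _ ≤ ∑ j, a i j * s (x j) := Finset.sum_le_sum fun j _ => h j
  have key' : ∀ (i : Fin N) (t : ℝ), (∀ j, a i j * s (x j) ≤ a i j * t) → x i ≤ t := by
    intro i t h
    rw [heq i, one_div, inv_mul_eq_div, div_le_iff₀ (hdpos i)]
    calc (∑ j, a i j * s (x j)) ≤ ∑ j, a i j * t := Finset.sum_le_sum fun j _ => h j
      _ = t * d i := by rw [hd i, mul_comm, Finset.sum_mul]
  -- s (x m) ≤ x m and x M ≤ s (x M)
  have hsm : s (x m) ≤ x m := by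
    apply key
    intro j
    exact mul_le_mul_of_nonneg_left (hs (hx m) (hx j) (hm j)) (hanneg m j)
  have hsM : x M ≤ s (x M) := by
    apply key'
    intro j
    exact mul_le_mul_of_nonneg_left (hs (hx j) (hx M) (hM j)) (hanneg M j)
  have hmI : s (x m) < c := lt_of_le_of_lt hsm hc1
  have hMJ : c < s (x M) := lt_of_lt_of_le hc2 hsM
  -- a second element in I
  have hI2 : ∃ j, j ≠ m ∧ s (x j) < c := by
    by_contra h
    push_neg at h
    have : c ≤ x m := by
      apply key
      intro j
      rcases eq_or_ne j m with rfl | hne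
      · rw [haself]; simp
      · exact mul_le_mul_of_nonneg_left (h j hne) (hanneg m j)
    exact absurd hc1 (not_lt.mpr this)
  have hJ2 : ∃ j, j ≠ M ∧ c < s (x j) := by
    by_contra h
    push_neg at h
    have : x M ≤ c := by
      apply key'
      intro j
      rcases eq_or_ne j M with rfl | hne
      · rw [haself]; simp
      · exact mul_le_mul_of_nonneg_left (h j hne) (hanneg M j)
    exact absurd hc2 (not_lt.mpr this)
  obtain ⟨i₁, hi₁ne, hi₁⟩ := hI2
  obtain ⟨j₁, hj₁ne, hj₁⟩ := hJ2
  have hIcard : 2 ≤ Set.ncard {i | s (x i) < c} := by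
    rw [show (2 : ℕ) = 1 + 1 from rfl, Nat.add_one_le_iff,
      Set.one_lt_ncard_iff (Set.toFinite _)]
    exact ⟨i₁, m, hi₁, hmI, hi₁ne⟩
  have hJcard : 2 ≤ Set.ncard {i | c < s (x i)} := by
    rw [show (2 : ℕ) = 1 + 1 from rfl, Nat.add_one_le_iff,
      Set.one_lt_ncard_iff (Set.toFinite _)]
    exact ⟨j₁, M, hj₁, hMJ, hj₁ne⟩
  refine ⟨hIcard, hJcard, ?_⟩
  have hdisj : Disjoint {i | s (x i) < c} {i | c < s (x i)} := by
    rw [Set.disjoint_left]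
    intro i hi hj
    simp only [Set.mem_setOf_eq] at hi hj; exact absurd (lt_trans hj hi) (lt_irrefl c)
  calc 4 ≤ Set.ncard {i | s (x i) < c} + Set.ncard {i | c < s (x i)} := by omega
    _ = Set.ncard ({i | s (x i) < c} ∪ {i | c < s (x i)}) :=
        (Set.ncard_union_eq hdisj (Set.toFinite _) (Set.toFinite _)).symm
    _ ≤ Set.ncard (Set.univ : Set (Fin N)) :=
        Set.ncard_le_ncard (Set.subset_univ _) (Set.toFinite _)
    _ = N := by simp [Set.ncard_univ]
end

section
/- Suppose all eigenvalues of P = D⁻¹A other than the Perron eigenvalue 1 are strictly negative. Then any equilibrium x* of ẋ = D⁻¹A s(x) − x with s non-decreasing is fully synchronized, i.e., all components of x* are equal. -/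
/-!
Write `w = s ∘ x`, so that the equilibrium reads `D x = A w`. Monotonicity of `s` makes the
Laplacian form `xᵀ (D - A) w` nonnegative, i.e. `xᵀ D x ≤ xᵀ D w`. After the substitution
`y = D^{1/2} x`, `z = D^{1/2} w` this says `‖M z‖² ≤ ⟪z, M z⟫` for the symmetric matrix
`M = D^{-1/2} A D^{-1/2}`, which is similar to `D⁻¹ A`. Every eigenvalue `μ` of `M` is `1` or
negative, so `M² - M` is positive semidefinite; hence `(M² - M) z = 0`, and since `0` is not an
eigenvalue, `M z = z`. Thus `x = w`, so `x` lies in the kernel of the Laplacian and is constant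
on the connected graph.
-/

open Matrix
open scoped MatrixOrder

namespace Matrix

variable {n : Type*} [Fintype n] [DecidableEq n]

theorem exists_mulVec_eq_smul_of_mem_spectrum {K : Type*} [Field K] {M : Matrix n n K} {μ : K}
    (hμ : μ ∈ spectrum K M) : ∃ v, v ≠ 0 ∧ M *ᵥ v = μ • v := by
  rw [← spectrum_toLin', ← Module.End.hasEigenvalue_iff_mem_spectrum] at hμ
  obtain ⟨v, hv, hv0⟩ := hμ.exists_hasEigenvector
  exact ⟨v, hv0, by simpa [Module.End.mem_eigenspace_iff] using hv⟩

theorem IsHermitian.mulVec_eq_self_of_dotProduct_le {M : Matrix n n ℝ} (hM : M.IsHermitian)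
    (hspec : ∀ (μ : ℝ) (v : n → ℝ), v ≠ 0 → M *ᵥ v = μ • v → μ = 1 ∨ μ < 0)
    {z : n → ℝ} (h : M *ᵥ z ⬝ᵥ M *ᵥ z ≤ z ⬝ᵥ M *ᵥ z) : M *ᵥ z = z := by
  have hT : (M * M - M).PosSemidef := by
    rw [← nonneg_iff_posSemidef]
    have hcfc : cfc (fun t : ℝ => t * t - t) M = M * M - M := by
      rw [cfc_sub _ _ _, cfc_mul _ _ _, cfc_id' ℝ M]
    rw [← hcfc]
    refine cfc_nonneg fun μ hμ => ?_
    obtain ⟨v, hv0, hv⟩ := exists_mulVec_eq_smul_of_mem_spectrum hμ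
    rcases hspec μ v hv0 hv with rfl | hneg <;> nlinarith
  have hquad : z ⬝ᵥ (M * M - M) *ᵥ z = 0 := by
    refine le_antisymm ?_ (by simpa using hT.dotProduct_mulVec_nonneg z)
    have hsymm : Mᵀ = M := by simpa using hM.eq
    rw [sub_mulVec, ← mulVec_mulVec, dotProduct_sub, dotProduct_mulVec z M, ← mulVec_transpose,
      hsymm]
    linarith [dotProduct_comm (M *ᵥ z) z]
  have hker : M *ᵥ (M *ᵥ z - z) = 0 := by
    rw [mulVec_sub, mulVec_mulVec, ← sub_mulVec]
    exact (hT.dotProduct_mulVec_zero_iff z).1 (by simpa using hquad)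
  by_contra hne
  simpa using hspec 0 _ (sub_ne_zero.2 hne) (by rw [hker, zero_smul])

theorem IsHermitian.eq_of_diagonal_mulVec_eq {A : Matrix n n ℝ} (hA : A.IsHermitian)
    {d : n → ℝ} (hd : ∀ i, 0 < d i)
    (hspec : ∀ (μ : ℝ) (v : n → ℝ), v ≠ 0 → A *ᵥ v = μ • diagonal d *ᵥ v → μ = 1 ∨ μ < 0)
    {x w : n → ℝ} (heq : diagonal d *ᵥ x = A *ᵥ w)
    (hle : x ⬝ᵥ diagonal d *ᵥ x ≤ x ⬝ᵥ diagonal d *ᵥ w) : x = w := by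
  set R := diagonal fun i => √(d i)
  set R' := diagonal fun i => (√(d i))⁻¹
  have hsqrt : ∀ i, √(d i) ≠ 0 := fun i => (Real.sqrt_pos.2 (hd i)).ne'
  have hR'R : ∀ v, R' *ᵥ R *ᵥ v = v := fun v => by
    ext i; simp [R, R', mulVec_diagonal, hsqrt]
  have hRR' : ∀ v, R *ᵥ R' *ᵥ v = v := fun v => by
    ext i; simp [R, R', mulVec_diagonal, hsqrt]
  have hRR : ∀ v, R *ᵥ R *ᵥ v = diagonal d *ᵥ v := fun v => by
    ext i; simp [R, mulVec_diagonal, ← mul_assoc, Real.mul_self_sqrt (hd i).le]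
  have hdot : ∀ u v, R *ᵥ u ⬝ᵥ R *ᵥ v = u ⬝ᵥ diagonal d *ᵥ v := fun u v => by
    rw [← hRR, dotProduct_mulVec u, ← mulVec_transpose, diagonal_transpose]
  set M := R' * A * R'
  have hM : M.IsHermitian := by
    have := isHermitian_conjTranspose_mul_mul R' hA
    rwa [diagonal_conjTranspose, star_trivial] at this
  have hMv : ∀ v, M *ᵥ v = R' *ᵥ A *ᵥ R' *ᵥ v := fun v => by
    simp only [M, mulVec_mulVec, Matrix.mul_assoc]
  have hMz : M *ᵥ R *ᵥ w = R *ᵥ x := by rw [hMv, hR'R, ← heq, ← hRR, hR'R]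
  have hMspec : ∀ (μ : ℝ) (v : n → ℝ), v ≠ 0 → M *ᵥ v = μ • v → μ = 1 ∨ μ < 0 := by
    intro μ v hv hMμ
    refine hspec μ (R' *ᵥ v) (fun h0 => hv ?_) ?_
    · rw [← hRR' v, h0, mulVec_zero]
    · rw [← hRR, hRR', ← mulVec_smul, ← hMμ, hMv, hRR']
  have hfix := hM.mulVec_eq_self_of_dotProduct_le hMspec (z := R *ᵥ w)
    (by rwa [hMz, dotProduct_comm (R *ᵥ w), hdot, hdot])
  rw [hMz] at hfix
  rw [← hR'R x, hfix, hR'R]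

end Matrix

namespace SimpleGraph

open Finset

variable {V : Type*} [Fintype V] [DecidableEq V] (G : SimpleGraph V) [DecidableRel G.Adj]

theorem dotProduct_lapMatrix_mulVec {R : Type*} [Field R] [CharZero R] (x y : V → R) :
    x ⬝ᵥ G.lapMatrix R *ᵥ y =
      (∑ i, ∑ j, if G.Adj i j then (x i - x j) * (y i - y j) else 0) / 2 := by
  have hswap : (∑ i, ∑ j, if G.Adj i j then x j * y i else 0) =
      ∑ i, ∑ j, if G.Adj i j then x i * y j else 0 := by
    rw [sum_comm]; simp_rw [G.adj_comm]
  have hdiag : (∑ i, ∑ j, if G.Adj i j then x j * y j else 0) =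
      ∑ i, ∑ j, if G.Adj i j then x i * y i else 0 := by
    rw [sum_comm]; simp_rw [G.adj_comm]
  have hdeg : x ⬝ᵥ G.degMatrix R *ᵥ y = ∑ i, ∑ j, if G.Adj i j then x i * y i else 0 := by
    simp_rw [dotProduct, degMatrix_mulVec_apply, degree_eq_sum_if_adj, sum_mul, mul_sum, ite_mul,
      mul_ite]
    simp [mul_comm]
  have hexpand : ∀ i j, (if G.Adj i j then (x i - x j) * (y i - y j) else 0) =
      (if G.Adj i j then x i * y i else 0) - (if G.Adj i j then x i * y j else 0)
        - (if G.Adj i j then x j * y i else 0) + (if G.Adj i j then x j * y j else 0) := by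
    intro i j; split_ifs <;> ring
  rw [lapMatrix, sub_mulVec, dotProduct_sub, hdeg, dotProduct_mulVec_adjMatrix,
    eq_div_iff two_ne_zero]
  simp_rw [hexpand, sum_add_distrib, sum_sub_distrib]
  rw [hswap, hdiag]
  ring

theorem dotProduct_lapMatrix_mulVec_nonneg_of_monovary {R : Type*} [Field R] [LinearOrder R]
    [IsStrictOrderedRing R] {x y : V → R} (h : Monovary y x) :
    0 ≤ x ⬝ᵥ G.lapMatrix R *ᵥ y := by
  rw [dotProduct_lapMatrix_mulVec]
  refine div_nonneg (sum_nonneg fun i _ => sum_nonneg fun j _ => ?_) zero_le_two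
  split_ifs
  · rw [mul_comm]; exact monovary_iff_forall_mul_nonneg.1 h j i
  · exact le_rfl

end SimpleGraph

open SimpleGraph

theorem stmt7_general {N : ℕ} (G : SimpleGraph (Fin N)) [DecidableRel G.Adj]
    (hconn : G.Connected)
    (a : Fin N → Fin N → ℝ) (haG : ∀ i j, a i j = if G.Adj i j then 1 else 0)
    (d : Fin N → ℝ) (hd : ∀ i, d i = ∑ j, a i j) (hdpos : ∀ i, 0 < d i)
    (hspec : ∀ (μ : ℝ) (v : Fin N → ℝ), v ≠ 0 →
      (∀ i, (1 / d i) * ∑ j, a i j * v j = μ * v i) → μ = 1 ∨ μ < 0)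
    (s : ℝ → ℝ) (hs : MonotoneOn s (Set.Icc (-1) 1))
    (x : Fin N → ℝ) (hx : ∀ j, x j ∈ Set.Icc (-1 : ℝ) 1)
    (heq : ∀ i, x i = (1 / d i) * ∑ j, a i j * s (x j)) :
    ∀ i j, x i = x j := by
  obtain rfl : a = G.adjMatrix ℝ := funext₂ haG
  have hD : G.degMatrix ℝ = diagonal d := by
    rw [degMatrix]; congr; funext i; rw [hd, degree_eq_sum_if_adj]; rfl
  set w := s ∘ x
  have hequil : diagonal d *ᵥ x = G.adjMatrix ℝ *ᵥ w := by
    ext i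
    rw [mulVec_diagonal, heq i, ← mul_assoc, mul_one_div_cancel (hdpos i).ne', one_mul]
    rfl
  have hle : x ⬝ᵥ diagonal d *ᵥ x ≤ x ⬝ᵥ diagonal d *ᵥ w := by
    have hmono : 0 ≤ x ⬝ᵥ G.lapMatrix ℝ *ᵥ w :=
      G.dotProduct_lapMatrix_mulVec_nonneg_of_monovary fun i j hij => hs (hx i) (hx j) hij.le
    rw [lapMatrix, hD, sub_mulVec, dotProduct_sub, ← hequil] at hmono
    linarith
  have hgen : ∀ (μ : ℝ) (v : Fin N → ℝ), v ≠ 0 →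
      G.adjMatrix ℝ *ᵥ v = μ • diagonal d *ᵥ v → μ = 1 ∨ μ < 0 := by
    refine fun μ v hv hAv => hspec μ v hv fun i => ?_
    have hrow : ∑ j, G.adjMatrix ℝ i j * v j = μ * (d i * v i) :=
      (congrFun hAv i).trans (by rw [Pi.smul_apply, mulVec_diagonal, smul_eq_mul])
    rw [hrow]
    field_simp [(hdpos i).ne']
  have hxw : x = w := (isHermitian_adjMatrix ℝ G).eq_of_diagonal_mulVec_eq hdpos hgen hequil hle
  have hharm : G.lapMatrix ℝ *ᵥ x = 0 := by
    rw [lapMatrix, hD, sub_mulVec, hequil, ← hxw, sub_self]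
  exact fun i j => (lapMatrix_mulVec_eq_zero_iff_forall_reachable G).1 hharm i j (hconn i j)

theorem stmt7 {N : ℕ} (G : SimpleGraph (Fin N)) [DecidableRel G.Adj]
    (hconn : G.Connected)
    (a : Fin N → Fin N → ℝ) (haG : ∀ i j, a i j = if G.Adj i j then 1 else 0)
    (d : Fin N → ℝ) (hd : ∀ i, d i = ∑ j, a i j) (hdpos : ∀ i, 0 < d i)
    (hspec : ∀ (μ : ℝ) (v : Fin N → ℝ), v ≠ 0 →
      (∀ i, (1 / d i) * ∑ j, a i j * v j = μ * v i) → μ = 1 ∨ μ < 0)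
    (s : ℝ → ℝ) (hs : MonotoneOn s (Set.Icc (-1) 1))
    (hmaps : Set.MapsTo s (Set.Icc (-1) 1) (Set.Icc (-1) 1))
    (x : Fin N → ℝ) (hx : ∀ j, x j ∈ Set.Icc (-1 : ℝ) 1)
    (heq : ∀ i, x i = (1 / d i) * ∑ j, a i j * s (x j)) :
    ∀ i j, x i = x j :=
  stmt7_general G hconn a haG d hd hdpos hspec s hs x hx heq
end

section
/- Let λ_{N-1} denote the second-largest eigenvalue of the normalized adjacency matrix D⁻¹A of a connected simple graph, and let K > 0 satisfy K·λ_{N-1} = 1 with λ_{N-1} > 0. Then for the saturation signal s(x) = min(1, max(-1, Kx)), every vector of the form x_ε = ε·v_{N-1} with 0 < ε ≤ 1/(K·‖v_{N-1}‖_∞), where v_{N-1} is an eigenvector of D⁻¹A for λ_{N-1}, is an equilibrium of ẋ = D⁻¹A s(x) − x that does not lie on the synchronization manifold (it is not a scalar multiple of 𝟏). -/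
theorem stmt9 {N : ℕ} (a : Fin (N + 1) → Fin (N + 1) → ℝ)
    (hsymm : ∀ i j, a i j = a j i) (ha : ∀ i j, 0 ≤ a i j)
    (d : Fin (N + 1) → ℝ) (hd : ∀ i, d i = ∑ j, a i j) (hdpos : ∀ i, 0 < d i)
    (K lam : ℝ) (hK : 0 < K) (hlam : 0 < lam) (hlam1 : lam < 1)
    (hKlam : K * lam = 1)
    (v : Fin (N + 1) → ℝ) (hv : v ≠ 0)
    (heig : ∀ i, (1 / d i) * ∑ j, a i j * v j = lam * v i)
    (ε : ℝ) (hε : 0 < ε)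
    (hεle : ε ≤ 1 / (K * Finset.univ.sup' Finset.univ_nonempty (fun i => |v i|))) :
    (∀ i, (1 / d i) * ∑ j, a i j * min 1 (max (-1) (K * (ε * v j))) = ε * v i) ∧
    ¬ ∃ c : ℝ, (fun i => ε * v i) = fun _ : Fin (N + 1) => c := by
  set M := Finset.univ.sup' Finset.univ_nonempty (fun i => |v i|) with hM
  have hMpos : 0 < M := by
    obtain ⟨i, hi⟩ := Function.ne_iff.mp hv
    have h1 : |v i| ≤ M := Finset.le_sup' (fun i => |v i|) (Finset.mem_univ i)
    have h2 : 0 < |v i| := abs_pos.mpr hi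
    linarith
  have hbound : ∀ j, |K * (ε * v j)| ≤ 1 := by
    intro j
    have h1 : |v j| ≤ M := Finset.le_sup' (fun i => |v i|) (Finset.mem_univ j)
    have h2 : ε * (K * M) ≤ 1 := by
      have := (le_div_iff₀ (by positivity)).mp hεle
      linarith
    rw [abs_mul, abs_mul, abs_of_pos hK, abs_of_pos hε]
    nlinarith [abs_nonneg (v j)]
  have hsat : ∀ j, min 1 (max (-1) (K * (ε * v j))) = K * (ε * v j) := by
    intro j
    have h := abs_le.mp (hbound j)
    rw [max_eq_right (by linarith [h.1]), min_eq_right (by linarith [h.2])]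
  constructor
  · intro i
    have h1 : ∑ j, a i j * (K * (ε * v j)) = (K * ε) * ∑ j, a i j * v j := by
      rw [Finset.mul_sum]; exact Finset.sum_congr rfl (fun j _ => by ring)
    simp_rw [hsat]
    rw [h1]
    have h2 := heig i
    have : (1 / d i) * ((K * ε) * ∑ j, a i j * v j)
        = (K * ε) * ((1 / d i) * ∑ j, a i j * v j) := by ring
    rw [this, h2]
    linear_combination ε * v i * hKlam
  · rintro ⟨c, hc⟩
    have hvi : ∀ i, v i = c / ε := by
      intro i
      have := congrFun hc i
      field_simp at this ⊢
      linarith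
    have h0 := heig 0
    have hs : ∑ j, a 0 j * v j = d 0 * (c / ε) := by
      simp_rw [hvi]
      rw [← Finset.sum_mul, ← hd]
    rw [hs, hvi 0] at h0
    have hd0 := hdpos 0
    have hce : c / ε = lam * (c / ε) := by
      rw [← h0]; field_simp
    have hc0 : c / ε = 0 := by nlinarith
    apply hv
    funext i
    rw [hvi i, hc0]; rfl
end

section
/- Sharp threshold for synchronization: let K be the Lipschitz constant of the non-decreasing signal function s : [-1,1] → [-1,1], and let λ_{N-1} be the second-largest eigenvalue of D⁻¹A for a connected simple graph. If K·λ_{N-1} < 1, then every equilibrium x* of ẋ = D⁻¹A s(x) − x is fully synchronized: x* = c·𝟏 for some c with s(c) = c. -/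
/-!
Let `x` be an equilibrium with extreme values `x_min < x_max`. Averaging gives
`s x_min ≤ x_min` and `x_max ≤ s x_max`.

If `s` fixes some `c ∈ (x_min, x_max)`, put `v = x - c` and `z = s ∘ x - c`. Then `D v = A z`,
and `z_i ^ 2 ≤ K z_i v_i` because `s` is monotone and `K`-Lipschitz. Also `z` takes both signs.
Test the quadratic form of `A` on the combination `r = γ z⁺ + δ z⁻` that is `D`-orthogonal
to `𝟏`. From below, `D v = A z` gives `r ⬝ A r ≥ W := γ² (z⁺ ⬝ D v) - δ² (z⁻ ⬝ D v) > 0`. From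
above, `r ⬝ A r ≤ l · r ⬝ D r ≤ K l⁺ W`: this is the spectral theorem for `D^{-1/2} A D^{-1/2}`,
whose eigenvectors for the eigenvalue `1` are multiples of `D^{1/2} 𝟏` since the graph is
connected. As `K l < 1`, this is a contradiction.

If `s` has no fixed point there, then `s - id` has constant sign on `[x_min, x_max]`. With
`∑ d_i (s x_i - x_i) = 0` this forces `s ∘ x = x`, so `x` is harmonic and hence constant.
-/

open Matrix Finset WithLp

theorem LinearMap.IsSymmetric.inner_apply_self_le_of_inner_eq_zero
    {E : Type*} [NormedAddCommGroup E] [InnerProductSpace ℝ E] [FiniteDimensional ℝ E]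
    {T : E →ₗ[ℝ] E} (hT : T.IsSymmetric) {φ : E} {l : ℝ}
    (heig : ∀ (μ : ℝ) (v : E), v ≠ 0 → T v = μ • v → μ ≤ l ∨ ∃ c : ℝ, v = c • φ)
    {p : E} (hp : inner ℝ φ p = 0) :
    inner ℝ (T p) p ≤ l * ‖p‖ ^ 2 := by
  set b := hT.eigenvectorBasis rfl
  have hcoef : ∀ k, inner ℝ (T p) (b k) = hT.eigenvalues rfl k * inner ℝ p (b k) := by
    intro k
    rw [hT, hT.apply_eigenvectorBasis, inner_smul_right]
    rfl
  rw [← real_inner_self_eq_norm_sq, ← b.sum_inner_mul_inner, ← b.sum_inner_mul_inner, mul_sum]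
  refine sum_le_sum fun k _ => ?_
  rw [hcoef, mul_assoc, real_inner_comm p]
  rcases heig _ (b k) (b.orthonormal.ne_zero k) (hT.apply_eigenvectorBasis rfl k) with hμ | ⟨c, hc⟩
  · exact mul_le_mul_of_nonneg_right hμ (mul_self_nonneg _)
  · rw [hc, inner_smul_right, real_inner_comm, hp]; simp

theorem Matrix.IsSymm.dotProduct_mulVec_le_of_dotProduct_eq_zero {ι : Type*} [Fintype ι]
    [DecidableEq ι] {B : Matrix ι ι ℝ} (hB : B.IsSymm) {φ : ι → ℝ} {l : ℝ}
    (heig : ∀ (μ : ℝ) (v : ι → ℝ), v ≠ 0 → B *ᵥ v = μ • v → μ ≤ l ∨ ∃ c : ℝ, v = c • φ)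
    {p : ι → ℝ} (hp : φ ⬝ᵥ p = 0) :
    p ⬝ᵥ (B *ᵥ p) ≤ l * (p ⬝ᵥ p) := by
  have hT : (toEuclideanLin B).IsSymmetric :=
    isSymmetric_toEuclideanLin_iff.2 (isHermitian_iff_isSymm.2 hB)
  have heigT (μ : ℝ) (v : EuclideanSpace ℝ ι) (hv : v ≠ 0) (hμ : toEuclideanLin B v = μ • v) :
      μ ≤ l ∨ ∃ c : ℝ, v = c • toLp 2 φ :=
    (heig μ (ofLp v) (by simpa using hv) (congrArg ofLp hμ)).imp_right
      fun ⟨c, hc⟩ => ⟨c, congrArg (toLp 2) hc⟩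
  have key := hT.inner_apply_self_le_of_inner_eq_zero heigT (p := toLp 2 p)
    (by simpa [EuclideanSpace.inner_toLp_toLp, dotProduct_comm] using hp)
  rw [← real_inner_self_eq_norm_sq, toLpLin_toLp, toLin'_apply, EuclideanSpace.inner_toLp_toLp,
    EuclideanSpace.inner_toLp_toLp, star_trivial, star_trivial] at key
  exact key

theorem Matrix.IsSymm.dotProduct_mulVec_le_of_sum_mul_eq_zero {ι : Type*} [Fintype ι]
    [DecidableEq ι] {A : Matrix ι ι ℝ} (hA : A.IsSymm) {d : ι → ℝ} (hd : ∀ i, 0 < d i) {l : ℝ}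
    (heig : ∀ (μ : ℝ) (v : ι → ℝ), v ≠ 0 → (∀ i, 1 / d i * (A *ᵥ v) i = μ * v i) →
      μ ≤ l ∨ ∃ c : ℝ, ∀ i, v i = c)
    {r : ι → ℝ} (hr : ∑ i, d i * r i = 0) :
    r ⬝ᵥ (A *ᵥ r) ≤ l * ∑ i, d i * r i ^ 2 := by
  set σ : ι → ℝ := fun i => √(d i)
  have hσ : ∀ i, σ i ≠ 0 := fun i => (Real.sqrt_pos.2 (hd i)).ne'
  have hσσ : ∀ i, σ i * σ i = d i := fun i => Real.mul_self_sqrt (hd i).le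
  set B := diagonal σ⁻¹ * A * diagonal σ⁻¹
  have hBv : ∀ w, B *ᵥ w = σ⁻¹ * (A *ᵥ (σ⁻¹ * w)) := fun w => by
    simp only [B, ← mulVec_mulVec, funext (mulVec_diagonal σ⁻¹ _)]; rfl
  have hB : B.IsSymm := by simp [B, IsSymm, transpose_mul, hA.eq, mul_assoc]
  have heigB (μ : ℝ) (v : ι → ℝ) (hv : v ≠ 0) (hμ : B *ᵥ v = μ • v) :
      μ ≤ l ∨ ∃ c : ℝ, v = c • σ := by
    have hw : σ⁻¹ * v ≠ 0 := fun h => hv (funext fun i => by simpa [hσ i] using congr_fun h i)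
    refine (heig μ _ hw fun i => ?_).imp_right fun ⟨c, hc⟩ => ⟨c, funext fun i => ?_⟩
    · have := congr_fun hμ i
      rw [hBv] at this
      simp only [Pi.mul_apply, Pi.inv_apply, Pi.smul_apply, smul_eq_mul] at this ⊢
      rw [← hσσ, one_div, mul_inv, mul_assoc, this]
      ring
    · have := hc i
      simp only [Pi.mul_apply, Pi.inv_apply, Pi.smul_apply, smul_eq_mul] at this ⊢
      rw [← this]
      field_simp [hσ i]
  have hσr : σ⁻¹ * (σ * r) = r := funext fun i => by simp [hσ i]
  have key := hB.dotProduct_mulVec_le_of_dotProduct_eq_zero heigB (p := σ * r)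
    (by simpa [dotProduct, ← hσσ, mul_assoc] using hr)
  have hquad : (σ * r) ⬝ᵥ (σ⁻¹ * (A *ᵥ r)) = r ⬝ᵥ (A *ᵥ r) :=
    sum_congr rfl fun i _ => by simp only [Pi.mul_apply, Pi.inv_apply]; field_simp [hσ i]
  have hnorm : (σ * r) ⬝ᵥ (σ * r) = ∑ i, d i * r i ^ 2 :=
    sum_congr rfl fun i _ => by simp only [Pi.mul_apply, ← hσσ]; ring
  rwa [hBv, hσr, hquad, hnorm] at key

theorem posPart_mul_nonneg_and_sq_le {K t v : ℝ} (h₀ : 0 ≤ t * v) (h : t ^ 2 ≤ K * (t * v)) :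
    0 ≤ t⁺ * v ∧ t⁺ ^ 2 ≤ K * (t⁺ * v) := by
  rcases le_total t 0 with ht | ht
  · simp [posPart_eq_zero.2 ht]
  · rw [posPart_eq_self.2 ht]
    exact ⟨h₀, h⟩

theorem mul_pos_of_sq_le_mul {K t v : ℝ} (ht : t ≠ 0) (h₀ : 0 ≤ t * v)
    (h : t ^ 2 ≤ K * (t * v)) : 0 < t * v := by
  refine h₀.lt_of_ne fun h' => ?_
  rw [← h', mul_zero] at h
  exact (sq_pos_of_ne_zero ht).not_ge h

theorem sq_mul_posPart_add_mul_negPart (t γ δ : ℝ) :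
    (γ * t⁺ + δ * t⁻) ^ 2 = γ ^ 2 * t⁺ ^ 2 + δ ^ 2 * t⁻ ^ 2 := by
  rcases le_total t 0 with ht | ht
  · simp [posPart_eq_zero.2 ht, mul_pow]
  · simp [negPart_eq_zero.2 ht, mul_pow]

-- The two sides differ by `(γ + δ) ^ 2 * (z⁺ ⬝ᵥ A *ᵥ z⁻) ≥ 0`.
theorem Matrix.IsSymm.sum_le_dotProduct_mulVec_smul_posPart_add_smul_negPart {ι : Type*}
    [Fintype ι] {A : Matrix ι ι ℝ} (hA : A.IsSymm) (hA0 : ∀ i j, 0 ≤ A i j) {d v z : ι → ℝ}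
    (hvz : ∀ i, d i * v i = (A *ᵥ z) i) (γ δ : ℝ) :
    γ ^ 2 * ∑ i, d i * (z⁺ i * v i) + δ ^ 2 * ∑ i, d i * (z⁻ i * -v i) ≤
      (γ • z⁺ + δ • z⁻) ⬝ᵥ (A *ᵥ (γ • z⁺ + δ • z⁻)) := by
  have hP : ∑ i, d i * (z⁺ i * v i) = z⁺ ⬝ᵥ (A *ᵥ z) :=
    sum_congr rfl fun i _ => by rw [← hvz]; ring
  have hQ : ∑ i, d i * (z⁻ i * -v i) = -(z⁻ ⬝ᵥ (A *ᵥ z)) := by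
    rw [dotProduct, ← sum_neg_distrib]; exact sum_congr rfl fun i _ => by rw [← hvz]; ring
  have hX : 0 ≤ z⁺ ⬝ᵥ (A *ᵥ z⁻) :=
    sum_nonneg fun i _ => mul_nonneg (posPart_nonneg _)
      (sum_nonneg fun j _ => mul_nonneg (hA0 i j) (negPart_nonneg _))
  have hsymm : z⁻ ⬝ᵥ (A *ᵥ z⁺) = z⁺ ⬝ᵥ (A *ᵥ z⁻) := by
    rw [dotProduct_comm, dotProduct_mulVec, ← mulVec_transpose, hA.eq]
  have hz : A *ᵥ z = A *ᵥ z⁺ - A *ᵥ z⁻ := by rw [← mulVec_sub, posPart_sub_negPart]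
  simp only [hP, hQ, hz, mulVec_add, mulVec_smul, dotProduct_add, add_dotProduct,
    dotProduct_smul, smul_dotProduct, dotProduct_sub, smul_eq_mul, hsymm]
  nlinarith [mul_nonneg (sq_nonneg (γ + δ)) hX]

theorem Matrix.IsSymm.nonneg_or_nonpos_of_mul_eq_mulVec {ι : Type*} [Fintype ι]
    {A : Matrix ι ι ℝ} (hA : A.IsSymm) (hA0 : ∀ i j, 0 ≤ A i j) {d : ι → ℝ}
    (hd : ∀ i, 0 < d i) {K l : ℝ} (hKl : K * l < 1)
    (hray : ∀ r : ι → ℝ, ∑ i, d i * r i = 0 → r ⬝ᵥ (A *ᵥ r) ≤ l * ∑ i, d i * r i ^ 2)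
    {v z : ι → ℝ} (hvz : ∀ i, d i * v i = (A *ᵥ z) i)
    (hzv : ∀ i, 0 ≤ z i * v i) (hzK : ∀ i, z i ^ 2 ≤ K * (z i * v i)) :
    (∀ i, 0 ≤ z i) ∨ ∀ i, z i ≤ 0 := by
  by_contra! ⟨⟨i, hi⟩, ⟨j, hj⟩⟩
  have hpos : ∀ k, 0 ≤ z⁺ k * v k ∧ z⁺ k ^ 2 ≤ K * (z⁺ k * v k) := fun k =>
    posPart_mul_nonneg_and_sq_le (hzv k) (hzK k)
  have hneg : ∀ k, 0 ≤ z⁻ k * -v k ∧ z⁻ k ^ 2 ≤ K * (z⁻ k * -v k) := fun k => by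
    have := posPart_mul_nonneg_and_sq_le (t := -z k) (v := -v k) (by simpa using hzv k)
      (by simpa using hzK k)
    rwa [posPart_neg] at this
  set P := ∑ k, d k * (z⁺ k * v k)
  set Q := ∑ k, d k * (z⁻ k * -v k)
  set γ := ∑ k, d k * z⁻ k
  set δ := -∑ k, d k * z⁺ k
  set r := γ • z⁺ + δ • z⁻
  have hr : ∑ k, d k * r k = 0 := by
    simp only [r, γ, δ, Pi.add_apply, Pi.smul_apply, smul_eq_mul, mul_add, sum_add_distrib]
    simp only [mul_left_comm (d _), ← mul_sum]
    ring
  have hnorm : ∑ k, d k * r k ^ 2 ≤ K * (γ ^ 2 * P + δ ^ 2 * Q) := by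
    rw [mul_sum, mul_sum, ← sum_add_distrib, mul_sum]
    refine sum_le_sum fun k _ => ?_
    have h1 := mul_le_mul_of_nonneg_left (hpos k).2 (mul_nonneg (hd k).le (sq_nonneg γ))
    have h2 := mul_le_mul_of_nonneg_left (hneg k).2 (mul_nonneg (hd k).le (sq_nonneg δ))
    have hr2 : r k ^ 2 = γ ^ 2 * z⁺ k ^ 2 + δ ^ 2 * z⁻ k ^ 2 :=
      sq_mul_posPart_add_mul_negPart (z k) γ δ
    rw [hr2]
    linarith
  have hP : 0 < P :=
    sum_pos' (fun k _ => mul_nonneg (hd k).le (hpos k).1) ⟨j, mem_univ _,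
      mul_pos (hd j) (mul_pos_of_sq_le_mul (posPart_pos hj).ne' (hpos j).1 (hpos j).2)⟩
  have hQ : 0 ≤ Q := sum_nonneg fun k _ => mul_nonneg (hd k).le (hneg k).1
  have hγ : 0 < γ :=
    sum_pos' (fun k _ => mul_nonneg (hd k).le (negPart_nonneg _))
      ⟨i, mem_univ _, mul_pos (hd i) (negPart_pos hi)⟩
  have hlow := hA.sum_le_dotProduct_mulVec_smul_posPart_add_smul_negPart hA0 hvz γ δ
  have hup := hray r hr
  have hr0 : 0 ≤ ∑ k, d k * r k ^ 2 := sum_nonneg fun k _ => mul_nonneg (hd k).le (sq_nonneg _)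
  have hW : 0 < γ ^ 2 * P + δ ^ 2 * Q := by positivity
  rcases le_total l 0 with hl | hl <;> nlinarith

theorem MonotoneOn.sq_sub_le_mul_of_abs_sub_le {f : ℝ → ℝ} {S : Set ℝ} (hf : MonotoneOn f S)
    {K : ℝ} (hK : ∀ x ∈ S, ∀ y ∈ S, |f x - f y| ≤ K * |x - y|) {x y : ℝ} (hx : x ∈ S)
    (hy : y ∈ S) : 0 ≤ (f x - f y) * (x - y) ∧ (f x - f y) ^ 2 ≤ K * ((f x - f y) * (x - y)) := by
  have h₀ : 0 ≤ (f x - f y) * (x - y) := by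
    simpa [mul_comm] using (monovaryOn_id_iff.2 hf).sub_mul_sub_nonneg hy hx
  refine ⟨h₀, ?_⟩
  calc (f x - f y) ^ 2 = |f x - f y| * |f x - f y| := by rw [sq, abs_mul_abs_self]
    _ ≤ K * |x - y| * |f x - f y| := mul_le_mul_of_nonneg_right (hK x hx y hy) (abs_nonneg _)
    _ = K * ((f x - f y) * (x - y)) := by
      rw [mul_assoc, ← abs_mul, mul_comm (x - y), abs_of_nonneg h₀]

theorem ContinuousOn.nonneg_or_nonpos_of_ne_zero {f : ℝ → ℝ} {a b : ℝ}
    (hf : ContinuousOn f (Set.Icc a b)) (h : ∀ t ∈ Set.Ioo a b, f t ≠ 0) :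
    (∀ t ∈ Set.Icc a b, 0 ≤ f t) ∨ ∀ t ∈ Set.Icc a b, f t ≤ 0 := by
  by_contra! ⟨⟨t, ht, hft⟩, ⟨u, hu, hfu⟩⟩
  have h0 : (0 : ℝ) ∈ Set.Ioo (f t) (f u) := ⟨hft, hfu⟩
  rcases le_total t u with htu | hut
  · obtain ⟨c, hc, hfc⟩ := intermediate_value_Ioo htu (hf.mono (Set.Icc_subset_Icc ht.1 hu.2)) h0
    exact h c (Set.Ioo_subset_Ioo ht.1 hu.2 hc) hfc
  · obtain ⟨c, hc, hfc⟩ := intermediate_value_Ioo' hut (hf.mono (Set.Icc_subset_Icc hu.1 ht.2)) h0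
    exact h c (Set.Ioo_subset_Ioo hu.1 ht.2 hc) hfc

theorem eq_zero_of_sum_mul_eq_zero {ι : Type*} [Fintype ι] {d g : ι → ℝ} (hd : ∀ i, 0 < d i)
    (hg : (∀ i, 0 ≤ g i) ∨ ∀ i, g i ≤ 0) (h : ∑ i, d i * g i = 0) (i : ι) : g i = 0 := by
  have hi : d i * g i = 0 := by
    rcases hg with hg | hg
    · exact (sum_eq_zero_iff_of_nonneg fun j _ => mul_nonneg (hd j).le (hg j)).1 h i (mem_univ i)
    · exact (sum_eq_zero_iff_of_nonpos fun j _ =>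
        mul_nonpos_of_nonneg_of_nonpos (hd j).le (hg j)).1 h i (mem_univ i)
  exact (mul_eq_zero.1 hi).resolve_left (hd i).ne'

namespace SimpleGraph

variable {V : Type*} {G : SimpleGraph V} [DecidableRel G.Adj]

theorem adjMatrix_nonneg (i j : V) : 0 ≤ G.adjMatrix ℝ i j := by
  rw [adjMatrix_apply]; split_ifs <;> norm_num

variable [Fintype V]

theorem sum_adjMatrix_mulVec (f : V → ℝ) :
    ∑ i, (G.adjMatrix ℝ *ᵥ f) i = ∑ i, G.degree i * f i := by
  simpa [dotProduct, mul_comm] using dotProduct_mulVec 1 (G.adjMatrix ℝ) f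

theorem le_of_degree_mul_eq_adjMatrix_mulVec {i : V} (hi : 0 < (G.degree i : ℝ)) {x c : ℝ}
    {f : V → ℝ} (hx : G.degree i * x = (G.adjMatrix ℝ *ᵥ f) i) (hf : ∀ j, f j ≤ c) : x ≤ c := by
  have := sum_le_card_nsmul (G.neighborFinset i) f c fun j _ => hf j
  rw [← adjMatrix_mulVec_apply, ← hx, card_neighborFinset_eq_degree, nsmul_eq_mul] at this
  exact le_of_mul_le_mul_left this hi

theorem ge_of_degree_mul_eq_adjMatrix_mulVec {i : V} (hi : 0 < (G.degree i : ℝ)) {x c : ℝ}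
    {f : V → ℝ} (hx : G.degree i * x = (G.adjMatrix ℝ *ᵥ f) i) (hf : ∀ j, c ≤ f j) : c ≤ x := by
  have := card_nsmul_le_sum (G.neighborFinset i) f c fun j _ => hf j
  rw [← adjMatrix_mulVec_apply, ← hx, card_neighborFinset_eq_degree, nsmul_eq_mul] at this
  exact le_of_mul_le_mul_left this hi

theorem forall_le_or_forall_ge_of_isFixedPt (hdeg : ∀ i, 0 < (G.degree i : ℝ)) {K l : ℝ}
    (hKl : K * l < 1)
    (hray : ∀ r : V → ℝ, ∑ i, (G.degree i : ℝ) * r i = 0 →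
      r ⬝ᵥ (G.adjMatrix ℝ *ᵥ r) ≤ l * ∑ i, (G.degree i : ℝ) * r i ^ 2)
    {S : Set ℝ} {s : ℝ → ℝ} (hs : MonotoneOn s S)
    (hlip : ∀ x ∈ S, ∀ y ∈ S, |s x - s y| ≤ K * |x - y|) {x : V → ℝ} (hxS : ∀ i, x i ∈ S)
    (hfix : ∀ i, G.degree i * x i = (G.adjMatrix ℝ *ᵥ (s ∘ x)) i) {c : ℝ} (hcS : c ∈ S)
    (hc : Function.IsFixedPt s c) :
    (∀ i, c ≤ s (x i)) ∨ ∀ i, s (x i) ≤ c := by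
  have hslope i := hc.eq ▸ hs.sq_sub_le_mul_of_abs_sub_le hlip (hxS i) hcS
  have hvz : ∀ i, G.degree i * (x i - c) = (G.adjMatrix ℝ *ᵥ fun j => s (x j) - c) i := by
    intro i
    rw [← show s ∘ x - Function.const _ c = fun j => s (x j) - c from rfl, mulVec_sub,
      Pi.sub_apply, adjMatrix_mulVec_const_apply, ← hfix, mul_sub]
  simpa only [sub_nonneg, sub_nonpos] using
    G.isSymm_adjMatrix.nonneg_or_nonpos_of_mul_eq_mulVec G.adjMatrix_nonneg hdeg hKl hray hvz
      (fun i => (hslope i).1) (fun i => (hslope i).2)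

theorem comp_eq_of_forall_Ioo_ne (hdeg : ∀ i, 0 < (G.degree i : ℝ)) {s : ℝ → ℝ} {x : V → ℝ}
    (hfix : ∀ i, G.degree i * x i = (G.adjMatrix ℝ *ᵥ (s ∘ x)) i) {a b : ℝ}
    (hx : ∀ i, x i ∈ Set.Icc a b) (hs : ContinuousOn s (Set.Icc a b))
    (hne : ∀ c ∈ Set.Ioo a b, s c ≠ c) : s ∘ x = x := by
  have hsign := (hs.sub continuousOn_id).nonneg_or_nonpos_of_ne_zero
    fun t ht => sub_ne_zero.2 (hne t ht)
  have hfixed : ∀ i, s (x i) - x i = 0 := eq_zero_of_sum_mul_eq_zero hdeg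
    (hsign.imp (fun h i => h _ (hx i)) (fun h i => h _ (hx i)))
    (by simp only [mul_sub, sum_sub_distrib, hfix, G.sum_adjMatrix_mulVec, Function.comp_apply,
      sub_self])
  exact funext fun i => sub_eq_zero.1 (hfixed i)

theorem Connected.eq_of_degree_mul_eq_adjMatrix_mulVec [DecidableEq V] (hG : G.Connected)
    {z : V → ℝ} (hz : ∀ i, G.degree i * z i = (G.adjMatrix ℝ *ᵥ z) i) (i j : V) : z i = z j := by
  refine G.lapMatrix_mulVec_eq_zero_iff_forall_reachable.mp ?_ i j (hG.preconnected i j)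
  ext k
  simp [lapMatrix, sub_mulVec, degMatrix_mulVec_apply, hz]

theorem Connected.dotProduct_adjMatrix_mulVec_le [DecidableEq V] (hG : G.Connected)
    (hdeg : ∀ i, 0 < (G.degree i : ℝ)) {l : ℝ}
    (hspec : ∀ (μ : ℝ) (v : V → ℝ), v ≠ 0 →
      (∀ i, 1 / (G.degree i : ℝ) * (G.adjMatrix ℝ *ᵥ v) i = μ * v i) → μ = 1 ∨ μ ≤ l)
    {r : V → ℝ} (hr : ∑ i, (G.degree i : ℝ) * r i = 0) :
    r ⬝ᵥ (G.adjMatrix ℝ *ᵥ r) ≤ l * ∑ i, (G.degree i : ℝ) * r i ^ 2 := by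
  refine G.isSymm_adjMatrix.dotProduct_mulVec_le_of_sum_mul_eq_zero hdeg (fun μ v hv hμ => ?_) hr
  rcases hspec μ v hv hμ with rfl | hμl
  · obtain ⟨i₀⟩ := hG.nonempty
    refine Or.inr ⟨v i₀, fun i => hG.eq_of_degree_mul_eq_adjMatrix_mulVec (fun k => ?_) i i₀⟩
    rw [← one_mul (v k), ← hμ k, ← mul_assoc, mul_one_div_cancel (hdeg k).ne', one_mul]
  · exact Or.inl hμl

end SimpleGraph

theorem stmt11_general {N : ℕ} (G : SimpleGraph (Fin N)) [DecidableRel G.Adj]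
    (hconn : G.Connected)
    (a : Fin N → Fin N → ℝ) (haG : ∀ i j, a i j = if G.Adj i j then 1 else 0)
    (d : Fin N → ℝ) (hd : ∀ i, d i = ∑ j, a i j) (hdpos : ∀ i, 0 < d i)
    (s : ℝ → ℝ) (hs : MonotoneOn s (Set.Icc (-1) 1))
    (K : ℝ)
    (hlip : ∀ x ∈ Set.Icc (-1 : ℝ) 1, ∀ y ∈ Set.Icc (-1 : ℝ) 1,
      |s x - s y| ≤ K * |x - y|)
    (l : ℝ)
    (hspec : ∀ (μ : ℝ) (v : Fin N → ℝ), v ≠ 0 →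
      (∀ i, (1 / d i) * ∑ j, a i j * v j = μ * v i) → μ = 1 ∨ μ ≤ l)
    (hthr : K * l < 1)
    (x : Fin N → ℝ) (hx : ∀ j, x j ∈ Set.Icc (-1 : ℝ) 1)
    (heq : ∀ i, x i = (1 / d i) * ∑ j, a i j * s (x j)) :
    ∃ c : ℝ, s c = c ∧ ∀ i, x i = c := by
  obtain rfl : a = G.adjMatrix ℝ := by ext i j; simp [haG, SimpleGraph.adjMatrix_apply]
  obtain rfl : d = fun i => (G.degree i : ℝ) := funext fun i => by
    simp [hd, SimpleGraph.degree_eq_sum_if_adj]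
  have hfix : ∀ i, G.degree i * x i = (G.adjMatrix ℝ *ᵥ (s ∘ x)) i := fun i => by
    rw [heq i, ← mul_assoc, mul_one_div_cancel (hdpos i).ne', one_mul]; rfl
  have : Nonempty (Fin N) := hconn.nonempty
  obtain ⟨imax, hmax⟩ := Finite.exists_max x
  obtain ⟨imin, hmin⟩ := Finite.exists_min x
  have hup : x imax ≤ s (x imax) := G.le_of_degree_mul_eq_adjMatrix_mulVec (hdpos imax) (hfix imax)
    fun j => hs (hx j) (hx imax) (hmax j)
  have hdown : s (x imin) ≤ x imin := G.ge_of_degree_mul_eq_adjMatrix_mulVec (hdpos imin)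
    (hfix imin) fun j => hs (hx imin) (hx j) (hmin j)
  rcases (hmin imax).eq_or_lt with hsync | hlt
  · have hconst : ∀ i, x i = x imax := fun i => le_antisymm (hmax i) (hsync ▸ hmin i)
    exact ⟨x imax, le_antisymm (G.ge_of_degree_mul_eq_adjMatrix_mulVec (hdpos imax) (hfix imax)
      fun j => (congrArg s (hconst j)).ge) hup, hconst⟩
  exfalso
  by_cases hc : ∃ c ∈ Set.Ioo (x imin) (x imax), s c = c
  · obtain ⟨c, hc, hsc⟩ := hc
    have hcI : c ∈ Set.Icc (-1 : ℝ) 1 := ⟨(hx imin).1.trans hc.1.le, hc.2.le.trans (hx imax).2⟩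
    rcases G.forall_le_or_forall_ge_of_isFixedPt hdpos hthr
      (fun r hr => hconn.dotProduct_adjMatrix_mulVec_le hdpos hspec hr) hs hlip hx hfix hcI hsc
      with h | h
    · linarith [h imin, hc.1]
    · linarith [h imax, hc.2]
  · push Not at hc
    have hcont : ContinuousOn s (Set.Icc (x imin) (x imax)) :=
      (LipschitzOnWith.of_dist_le' (by simpa [Real.dist_eq] using hlip)).continuousOn.mono
        (Set.Icc_subset_Icc (hx imin).1 (hx imax).2)
    have hxfix := G.comp_eq_of_forall_Ioo_ne hdpos hfix (fun i => ⟨hmin i, hmax i⟩) hcont hc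
    exact hlt.ne
      (hconn.eq_of_degree_mul_eq_adjMatrix_mulVec (fun i => by rw [hfix, hxfix]) imin imax)

theorem stmt11 {N : ℕ} (G : SimpleGraph (Fin N)) [DecidableRel G.Adj]
    (hconn : G.Connected)
    (a : Fin N → Fin N → ℝ) (haG : ∀ i j, a i j = if G.Adj i j then 1 else 0)
    (d : Fin N → ℝ) (hd : ∀ i, d i = ∑ j, a i j) (hdpos : ∀ i, 0 < d i)
    (s : ℝ → ℝ) (hs : MonotoneOn s (Set.Icc (-1) 1))
    (hmaps : Set.MapsTo s (Set.Icc (-1) 1) (Set.Icc (-1) 1))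
    (K : ℝ) (hK : 0 ≤ K)
    (hlip : ∀ x ∈ Set.Icc (-1 : ℝ) 1, ∀ y ∈ Set.Icc (-1 : ℝ) 1,
      |s x - s y| ≤ K * |x - y|)
    (l : ℝ)
    (hspec : ∀ (μ : ℝ) (v : Fin N → ℝ), v ≠ 0 →
      (∀ i, (1 / d i) * ∑ j, a i j * v j = μ * v i) → μ = 1 ∨ μ ≤ l)
    (hthr : K * l < 1)
    (x : Fin N → ℝ) (hx : ∀ j, x j ∈ Set.Icc (-1 : ℝ) 1)
    (heq : ∀ i, x i = (1 / d i) * ∑ j, a i j * s (x j)) :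
    ∃ c : ℝ, s c = c ∧ ∀ i, x i = c :=
  stmt11_general G hconn a haG d hd hdpos s hs K hlip l hspec hthr x hx heq
end

section
/- If s : [-1,1] → [-1,1] is non-decreasing and all its fixed points are isolated (hence finitely many, ordered c_1 < … < c_M), and every fixed point is unstable in the sense that arbitrarily close to c_i there exists x with (x − c_i)(s(x) − x) > 0, then a contradiction follows; hence at least one fixed point is stable. -/
theorem stmt18 (s : ℝ → ℝ)
    (hcont : ContinuousOn s (Set.Icc (-1) 1))
    (hmono : MonotoneOn s (Set.Icc (-1) 1))
    (hmaps : Set.MapsTo s (Set.Icc (-1) 1) (Set.Icc (-1) 1))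
    (hiso : ∀ c ∈ Set.Icc (-1 : ℝ) 1, s c = c →
      ∃ δ > (0 : ℝ), ∀ x ∈ Set.Icc (-1 : ℝ) 1, s x = x → |x - c| < δ → x = c)
    (huns : ∀ c ∈ Set.Icc (-1 : ℝ) 1, s c = c → ∀ δ > (0 : ℝ),
      ∃ x ∈ Set.Icc (-1 : ℝ) 1, |x - c| < δ ∧ (x - c) * (s x - x) > 0) :
    False := by
  set I : Set ℝ := Set.Icc (-1) 1 with hI
  have hgcont : ContinuousOn (fun x => s x - x) I := hcont.sub continuousOn_id
  -- IVT helper: if g changes sign on [a,b] ⊆ I, there is a fixed point in [a,b]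
  have hIVT : ∀ a b : ℝ, a ∈ I → b ∈ I → a ≤ b → s a - a ≥ 0 → s b - b ≤ 0 →
      ∃ z ∈ Set.Icc a b, s z = z := by
    intro a b ha hb hab hga hgb
    have hsub : Set.Icc a b ⊆ I := Set.Icc_subset_Icc ha.1 hb.2
    have := intermediate_value_Icc' hab ((hgcont.mono hsub))
    have h0 : (0:ℝ) ∈ Set.Icc (s b - b) (s a - a) := ⟨hgb, hga⟩
    obtain ⟨z, hz, hz0⟩ := this h0
    exact ⟨z, hz, by linarith [show s z - z = 0 from hz0]⟩
  have hIVT' : ∀ a b : ℝ, a ∈ I → b ∈ I → a ≤ b → s a - a ≤ 0 → s b - b ≥ 0 →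
      ∃ z ∈ Set.Icc a b, s z = z := by
    intro a b ha hb hab hga hgb
    have hsub : Set.Icc a b ⊆ I := Set.Icc_subset_Icc ha.1 hb.2
    have := intermediate_value_Icc hab ((hgcont.mono hsub))
    have h0 : (0:ℝ) ∈ Set.Icc (s a - a) (s b - b) := ⟨hga, hgb⟩
    obtain ⟨z, hz, hz0⟩ := this h0
    exact ⟨z, hz, by linarith [show s z - z = 0 from hz0]⟩
  -- the set A of points where s x ≥ x
  set A : Set ℝ := I ∩ (fun x => s x - x) ⁻¹' (Set.Ici 0) with hA
  have hAclosed : IsClosed A :=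
    hgcont.preimage_isClosed_of_isClosed isClosed_Icc isClosed_Ici
  have hm1 : (-1 : ℝ) ∈ I := by constructor <;> norm_num
  have hm1A : (-1 : ℝ) ∈ A := by
    refine ⟨hm1, ?_⟩
    have := (hmaps hm1).1
    simp only [Set.mem_preimage, Set.mem_Ici]
    linarith
  have hAne : A.Nonempty := ⟨-1, hm1A⟩
  have hAbdd : BddAbove A := ⟨1, fun x hx => hx.1.2⟩
  -- the set T of fixed points c with s x ≤ x for all x > c in I
  set T : Set ℝ := {c | (c ∈ I ∧ s c = c) ∧ ∀ x ∈ I, c < x → s x ≤ x} with hT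
  -- T is nonempty: sSup A works
  have hTne : T.Nonempty := by
    have haA : sSup A ∈ A := hAclosed.csSup_mem hAne hAbdd
    set a := sSup A with ha
    have haI : a ∈ I := haA.1
    have hale : a ≤ s a := by
      apply csSup_le hAne
      intro x hx
      have hx1 : s x - x ≥ 0 := hx.2
      have : s x ≤ s a := hmono hx.1 haI (le_csSup hAbdd hx)
      linarith
    have hafix : s a = a := by
      by_contra hne
      have hlt : a < s a := lt_of_le_of_ne hale (fun h => hne h.symm)
      have hsaI : s a ∈ I := hmaps haI
      have : s a ≤ s (s a) := hmono haI hsaI hale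
      have : s a ∈ A := ⟨hsaI, by simpa using by linarith⟩
      have := le_csSup hAbdd this
      linarith
    refine ⟨a, ⟨haI, hafix⟩, fun x hx hax => ?_⟩
    by_contra hlt
    push_neg at hlt
    have : x ∈ A := ⟨hx, by simpa using by linarith⟩
    have := le_csSup hAbdd this
    linarith
  have hTbdd : BddBelow T := ⟨-1, fun x hx => hx.1.1.1⟩
  set c₀ := sInf T with hc₀
  -- c₀ is a fixed point in I
  have hFixclosed : IsClosed (I ∩ (fun x => s x - x) ⁻¹' ({0} : Set ℝ)) :=
    hgcont.preimage_isClosed_of_isClosed isClosed_Icc isClosed_singleton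
  have hTsub : T ⊆ I ∩ (fun x => s x - x) ⁻¹' ({0} : Set ℝ) := by
    intro c hc
    exact ⟨hc.1.1, by simp [hc.1.2]⟩
  have hc₀mem : c₀ ∈ I ∩ (fun x => s x - x) ⁻¹' ({0} : Set ℝ) := by
    have h1 : c₀ ∈ closure T := csInf_mem_closure hTne hTbdd
    have := closure_minimal hTsub hFixclosed
    exact this h1
  have hc₀I : c₀ ∈ I := hc₀mem.1
  have hc₀fix : s c₀ = c₀ := by
    have := hc₀mem.2
    simp only [Set.mem_preimage, Set.mem_singleton_iff] at this
    linarith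
  -- property of c₀ : to the right, s x ≤ x
  have hc₀prop : ∀ x ∈ I, c₀ < x → s x ≤ x := by
    intro x hx hcx
    obtain ⟨c, hcT, hclt⟩ := exists_lt_of_csInf_lt hTne hcx
    exact hcT.2 x hx hclt
  -- isolation at c₀
  obtain ⟨δ, hδpos, hδ⟩ := hiso c₀ hc₀I hc₀fix
  -- instability at c₀
  obtain ⟨x, hxI, hxδ, hxprod⟩ := huns c₀ hc₀I hc₀fix δ hδpos
  have hxne : x ≠ c₀ := by
    intro h; rw [h] at hxprod; simp at hxprod
  rcases lt_or_gt_of_ne hxne with hxlt | hxgt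
  · -- x < c₀ : s x < x
    have hsx : s x < x := by nlinarith
    -- no sign change on [x, c₀): s y < y for x ≤ y < c₀
    have hneg : ∀ y ∈ I, x ≤ y → y < c₀ → s y < y := by
      intro y hy hxy hyc
      by_contra hge
      push_neg at hge
      obtain ⟨z, hzmem, hzfix⟩ := hIVT' x y hxI hy hxy (by linarith) (by linarith)
      have hzI : z ∈ I := ⟨le_trans hxI.1 hzmem.1, le_trans hzmem.2 (le_of_lt (lt_of_lt_of_le hyc hc₀I.2))⟩
      have hzδ : |z - c₀| < δ := by
        rw [abs_lt] at hxδ ⊢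
        constructor
        · linarith [hzmem.1, hxδ.1]
        · linarith [hzmem.2]
      have := hδ z hzI hzfix hzδ
      linarith [hzmem.2, this]
    -- sup of A below x is a fixed point in T, below c₀ : contradiction
    set B : Set ℝ := A ∩ Set.Iic x with hB
    have hBclosed : IsClosed B := hAclosed.inter isClosed_Iic
    have hBne : B.Nonempty := ⟨-1, hm1A, hxI.1⟩
    have hBbdd : BddAbove B := ⟨x, fun z hz => hz.2⟩
    have hc₁B : sSup B ∈ B := hBclosed.csSup_mem hBne hBbdd
    set c₁ := sSup B with hc₁
    have hc₁I : c₁ ∈ I := hc₁B.1.1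
    have hc₁lex : c₁ ≤ x := hc₁B.2
    have hc₁ge : s c₁ - c₁ ≥ 0 := hc₁B.1.2
    have hc₁ltx : c₁ < x := lt_of_le_of_ne hc₁lex (by intro h; rw [h] at hc₁ge; linarith)
    have hc₁fix : s c₁ = c₁ := by
      by_contra hne
      obtain ⟨z, hzmem, hzfix⟩ := hIVT c₁ x hc₁I hxI (le_of_lt hc₁ltx) hc₁ge (by linarith)
      have hzI : z ∈ I := ⟨le_trans hc₁I.1 hzmem.1, le_trans hzmem.2 hxI.2⟩
      have hzB : z ∈ B := ⟨⟨hzI, by simp [hzfix]⟩, hzmem.2⟩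
      have hzle : z ≤ c₁ := le_csSup hBbdd hzB
      have hzeq : z = c₁ := le_antisymm hzle hzmem.1
      rw [hzeq] at hzfix
      exact hne hzfix
    have hc₁T : c₁ ∈ T := by
      refine ⟨⟨hc₁I, hc₁fix⟩, fun y hy hcy => ?_⟩
      rcases le_or_gt y x with hyx | hxy
      · -- y ≤ x : y ∉ B
        by_contra hgt
        push_neg at hgt
        have : y ∈ B := ⟨⟨hy, by simpa using by linarith⟩, hyx⟩
        have := le_csSup hBbdd this
        linarith
      · rcases lt_trichotomy y c₀ with h1 | h2 | h3
        · exact le_of_lt (hneg y hy (le_of_lt hxy) h1)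
        · rw [h2, hc₀fix]
        · exact hc₀prop y hy h3
    have := csInf_le hTbdd hc₁T
    linarith
  · -- x > c₀ : s x > x contradicts property of c₀
    have hsx : s x > x := by nlinarith
    have := hc₀prop x hxI hxgt
    linarith
end

section
/- Exponential decay of disagreement: under the condition α := 1 − K·max_{1 ≤ i ≤ N−1}|λ_i| > 0, along solutions of ẋ = D⁻¹A s(x) − x the weighted disagreement V(e) = ½ eᵀ D e with e = x − x̄𝟏 satisfies V̇ ≤ −2α V, and hence ‖e(t)‖_D ≤ ‖e(0)‖_D · e^{−αt}; it suffices to prove the differential inequality V̇(e) = K ẽᵀ à Θ ẽ − ‖ẽ‖₂² ≤ −2αV for ẽ = D^{1/2}e orthogonal to the Perron eigenvector of à = D^{-1/2}AD^{-1/2} and Θ diagonal with entries in [0,1]. -/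
open Matrix

theorem stmt19 {N : ℕ} [NeZero N]
    (A : Matrix (Fin (N + 1)) (Fin (N + 1)) ℝ) (hA : A.IsSymm)
    (lam : Fin (N + 1) → ℝ) (hmono : Monotone lam)
    (hlast : lam (Fin.last N) = 1)
    (v : Fin (N + 1) → Fin (N + 1) → ℝ)
    (horth : ∀ i j, v i ⬝ᵥ v j = if i = j then (1 : ℝ) else 0)
    (heig : ∀ i, A.mulVec (v i) = lam i • v i)
    (θ : Fin (N + 1) → ℝ) (hθ : ∀ i, θ i ∈ Set.Icc (0 : ℝ) 1)
    (e : Fin (N + 1) → ℝ) (he : e ⬝ᵥ v (Fin.last N) = 0)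
    (K α : ℝ) (hK : 0 ≤ K)
    (hα : α = 1 - K * Finset.univ.sup' Finset.univ_nonempty
      (fun i : Fin N => |lam i.castSucc|))
    (hαpos : 0 < α) :
    K * (e ⬝ᵥ A.mulVec (fun i => θ i * e i)) - e ⬝ᵥ e ≤
      -2 * α * ((1 / 2) * (e ⬝ᵥ e)) := by
  set μ : ℝ := Finset.univ.sup' Finset.univ_nonempty
      (fun i : Fin N => |lam i.castSucc|) with hμ
  have hμ0 : 0 ≤ μ := le_trans (abs_nonneg _)
    (Finset.le_sup' (fun i : Fin N => |lam i.castSucc|) (Finset.mem_univ (0 : Fin N)))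
  set M : Matrix (Fin (N+1)) (Fin (N+1)) ℝ := Matrix.of v with hM
  have hMMT : M * Mᵀ = 1 := by
    ext i j
    simpa [hM, Matrix.mul_apply, Matrix.one_apply, dotProduct] using horth i j
  have hMTM : Mᵀ * M = 1 := mul_eq_one_comm.mp hMMT
  set c : Fin (N+1) → ℝ := M.mulVec e with hc
  have hce : Mᵀ.mulVec c = e := by
    rw [hc, Matrix.mulVec_mulVec, hMTM, Matrix.one_mulVec]
  have hclast : c (Fin.last N) = 0 := by
    simpa [hc, hM, Matrix.mulVec, dotProduct, mul_comm] using he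
  have hAM : A * Mᵀ = Mᵀ * Matrix.diagonal lam := by
    ext i j
    have h := congrFun (heig j) i
    simp only [Matrix.mulVec, dotProduct, Pi.smul_apply, smul_eq_mul] at h
    rw [Matrix.mul_diagonal]
    simp only [Matrix.mul_apply, Matrix.transpose_apply, hM, Matrix.of_apply]
    rw [h]; ring
  have hAe : A.mulVec e = Mᵀ.mulVec (fun i => lam i * c i) := by
    have h1 : A.mulVec e = (Mᵀ * Matrix.diagonal lam).mulVec c := by
      rw [← hAM, ← Matrix.mulVec_mulVec, hce]
    have h2 : (Mᵀ * Matrix.diagonal lam).mulVec c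
        = Mᵀ.mulVec ((Matrix.diagonal lam).mulVec c) :=
      (Matrix.mulVec_mulVec _ _ _).symm
    have h3 : (Matrix.diagonal lam).mulVec c = fun i => lam i * c i := by
      funext i; exact Matrix.mulVec_diagonal lam c i
    rw [h1, h2, h3]
  have key : ∀ u : Fin (N+1) → ℝ, (Mᵀ.mulVec u) ⬝ᵥ (Mᵀ.mulVec u) = u ⬝ᵥ u := by
    intro u
    rw [Matrix.dotProduct_mulVec, Matrix.vecMul_transpose, Matrix.mulVec_mulVec,
      hMMT, Matrix.one_mulVec]
  have hee : e ⬝ᵥ e = c ⬝ᵥ c := by rw [← hce, key]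
  have hAee : (A.mulVec e) ⬝ᵥ (A.mulVec e) = (fun i => lam i * c i) ⬝ᵥ (fun i => lam i * c i) := by
    rw [hAe, key]
  have hdd : (fun i => lam i * c i) ⬝ᵥ (fun i => lam i * c i) ≤ μ ^ 2 * (c ⬝ᵥ c) := by
    simp only [dotProduct, Finset.mul_sum]
    apply Finset.sum_le_sum
    intro i _
    rcases Fin.eq_castSucc_or_eq_last i with ⟨j, rfl⟩ | rfl
    · have hj : |lam j.castSucc| ≤ μ :=
        Finset.le_sup' (fun i : Fin N => |lam i.castSucc|) (Finset.mem_univ j)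
      obtain ⟨hl, hr⟩ := abs_le.mp hj
      have h2 : lam j.castSucc ^ 2 ≤ μ ^ 2 := sq_le_sq' hl hr
      nlinarith [mul_self_nonneg (c j.castSucc), h2]
    · simp [hclast]
  set y : Fin (N+1) → ℝ := fun i => θ i * e i with hy
  have hyy : y ⬝ᵥ y ≤ e ⬝ᵥ e := by
    simp only [dotProduct, hy]
    apply Finset.sum_le_sum
    intro i _
    obtain ⟨h0, h1⟩ := hθ i
    have h2 : θ i ^ 2 ≤ 1 := by nlinarith
    nlinarith [mul_self_nonneg (e i), h2]
  have hsym : e ⬝ᵥ A.mulVec y = (A.mulVec e) ⬝ᵥ y := by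
    rw [Matrix.dotProduct_mulVec, ← Matrix.mulVec_transpose, hA.eq]
  have hS0 : 0 ≤ e ⬝ᵥ e := by
    simp only [dotProduct]
    exact Finset.sum_nonneg fun i _ => mul_self_nonneg (e i)
  have hcs : ((A.mulVec e) ⬝ᵥ y) ^ 2 ≤ ((A.mulVec e) ⬝ᵥ (A.mulVec e)) * (y ⬝ᵥ y) := by
    simpa [dotProduct, sq] using
      Finset.sum_mul_sq_le_sq_mul_sq Finset.univ (A.mulVec e) y
  have hy0 : 0 ≤ y ⬝ᵥ y := by
    simp only [dotProduct]
    exact Finset.sum_nonneg fun i _ => mul_self_nonneg (y i)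
  have hP : (A.mulVec e) ⬝ᵥ y ≤ μ * (e ⬝ᵥ e) := by
    have h1 : ((A.mulVec e) ⬝ᵥ y) ^ 2 ≤ (μ * (e ⬝ᵥ e)) ^ 2 := by
      calc ((A.mulVec e) ⬝ᵥ y) ^ 2 ≤ ((A.mulVec e) ⬝ᵥ (A.mulVec e)) * (y ⬝ᵥ y) := hcs
        _ ≤ (μ ^ 2 * (e ⬝ᵥ e)) * (e ⬝ᵥ e) := by
            have hA2 : (A.mulVec e) ⬝ᵥ (A.mulVec e) ≤ μ ^ 2 * (e ⬝ᵥ e) := by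
              rw [hAee, hee]; exact hdd
            have hA20 : 0 ≤ (A.mulVec e) ⬝ᵥ (A.mulVec e) := by
              simp only [dotProduct]
              exact Finset.sum_nonneg fun i _ => mul_self_nonneg _
            nlinarith
        _ = (μ * (e ⬝ᵥ e)) ^ 2 := by ring
    nlinarith [mul_nonneg hμ0 hS0]
  have hfin : K * (e ⬝ᵥ A.mulVec y) ≤ K * (μ * (e ⬝ᵥ e)) := by
    rw [hsym]; exact mul_le_mul_of_nonneg_left hP hK
  have hKμ : K * μ = 1 - α := by rw [hα]; ring
  nlinarith [hfin, hS0]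
end
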